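/- arXiv:0901.4383 — 2 statements merged into one kernel-verified Lean document; each statement's English description precedes it below -/
import Mathlib

section
/- For Cantor sets C₁, C₂ ⊂ ℝ (compact, perfect, totally disconnected, nonempty), if the thickness satisfies τ(C₁)·τ(C₂) > 1, and neither C₁ is contained in a gap (a bounded connected component of the complement, or an unbounded component) of C₂ nor C₂ is contained in a gap of C₁, then C₁ ∩ C₂ ≠ ∅. -/
open Set ENNReal

/-- A Cantor set in ℝ: nonempty, compact, perfect, totally disconnected. -/
def IsCantorSet (C : Set ℝ) : Prop :=
  C.Nonempty ∧ IsCompact C ∧ Perfect C ∧ IsTotallyDisconnected C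

/-- The convex hull of a compact set of reals. -/
noncomputable def cHull (C : Set ℝ) : Set ℝ := Set.Icc (sInf C) (sSup C)

/-- `U` is a gap of `C`: a connected component of (convex hull of C) \ C. -/
def IsGap (C U : Set ℝ) : Prop :=
  ∃ x ∈ cHull C \ C, U = connectedComponentIn (cHull C \ C) x

/-- A presentation of `C`: an ordering of the gaps of `C`. -/
def IsPresentation (C : Set ℝ) (U : ℕ → Set ℝ) : Prop :=
  (∀ n, IsGap C (U n)) ∧ Function.Injective U ∧ ∀ G, IsGap C G → ∃ n, U n = G

/-- The bridge `K`: the connected component of the hull minus the first `n+1` gaps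
containing the point `u`. -/
noncomputable def bridge (C : Set ℝ) (U : ℕ → Set ℝ) (n : ℕ) (u : ℝ) : Set ℝ :=
  connectedComponentIn (cHull C \ ⋃ i ∈ Finset.range (n + 1), U i) u

/-- The ratio τ(C, 𝒰, u) = |K|/|Uₙ|. -/
noncomputable def gapRatio (C : Set ℝ) (U : ℕ → Set ℝ) (n : ℕ) (u : ℝ) : ℝ≥0∞ :=
  ENNReal.ofReal (Metric.diam (bridge C U n u)) / ENNReal.ofReal (Metric.diam (U n))

/-- The thickness τ(C) = sup over presentations of inf over gap boundary points of the ratio. -/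
noncomputable def thickness (C : Set ℝ) : ℝ≥0∞ :=
  ⨆ (U : ℕ → Set ℝ) (_ : IsPresentation C U),
    ⨅ (n : ℕ) (u : ℝ) (_ : u ∈ frontier (U n) ∩ C), gapRatio C U n u

/-- The denseness θ(C) = inf over presentations of sup over gap boundary points of the ratio. -/
noncomputable def denseness (C : Set ℝ) : ℝ≥0∞ :=
  ⨅ (U : ℕ → Set ℝ) (_ : IsPresentation C U),
    ⨆ (n : ℕ) (u : ℝ) (_ : u ∈ frontier (U n) ∩ C), gapRatio C U n u

/-!
Suppose `C₁ ∩ C₂ = ∅` and fix presentations `𝒰`, `𝒱` of `C₁`, `C₂` whose thicknesses `τ₁`, `τ₂`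
satisfy `τ₁ τ₂ > 1`. Call gaps `U = (u₁, u₂)` and `V = (v₁, v₂)` of the two sets interlaced if
`u₁ < v₁ < u₂ < v₂` (or symmetrically). Since neither set lies in a gap of the other, some pair of
gaps is interlaced. Given one, the bridge of `C₁` at `u₂` and the bridge of `C₂` at `v₁` cannot
stay inside `V` and `U` respectively, for then `τ₁ |U| ≤ |V|` and `τ₂ |V| ≤ |U|`. So one of them,
say the first, contains `v₂ ∉ C₁`; the gap of `C₁` containing `v₂` has a later index than `U` and
is interlaced with `V`. This makes the index sums of interlaced pairs unbounded, whereas interlaced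
gaps are longer than `dist (C₁, C₂) > 0` and a bounded interval holds only finitely many disjoint
gaps that long.
-/

open Function MeasureTheory

section RealComponents

variable {S : Set ℝ} {a b x : ℝ}

lemma connectedComponentIn_eq_Ioo (hx : x ∈ Ioo a b) (hS : Ioo a b ⊆ S) (ha : a ∉ S)
    (hb : b ∉ S) : connectedComponentIn S x = Ioo a b := by
  refine Subset.antisymm (fun y hy => ?_) (isPreconnected_Ioo.subset_connectedComponentIn hx hS)
  have hxS := mem_connectedComponentIn (hS hx)
  have hpc : IsPreconnected (connectedComponentIn S x) := isPreconnected_connectedComponentIn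
  refine ⟨lt_of_not_ge fun hya => ha ?_, lt_of_not_ge fun hby => hb ?_⟩
  · exact connectedComponentIn_subset _ _ (hpc.Icc_subset hy hxS ⟨hya, hx.1.le⟩)
  · exact connectedComponentIn_subset _ _ (hpc.Icc_subset hxS hy ⟨hx.2.le, hby⟩)

lemma connectedComponentIn_subset_Ici (hax : a < x) (hS : Disjoint S (Ioo a x)) (hx : x ∈ S) :
    connectedComponentIn S x ⊆ Ici x := by
  refine fun y hy => mem_Ici.2 <| not_lt.1 fun hyx => ?_
  obtain ⟨z, hz, hzx⟩ := exists_between (max_lt hax hyx)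
  have hzS : z ∈ S := connectedComponentIn_subset _ _ <|
    isPreconnected_connectedComponentIn.Icc_subset hy (mem_connectedComponentIn hx)
      ⟨(le_max_right _ _).trans hz.le, hzx.le⟩
  exact disjoint_left.1 hS hzS ⟨(le_max_left _ _).trans_lt hz, hzx⟩

lemma connectedComponentIn_subset_Iic (hxb : x < b) (hS : Disjoint S (Ioo x b)) (hx : x ∈ S) :
    connectedComponentIn S x ⊆ Iic x := by
  refine fun y hy => mem_Iic.2 <| not_lt.1 fun hxy => ?_
  obtain ⟨z, hxz, hz⟩ := exists_between (lt_min hxb hxy)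
  have hzS : z ∈ S := connectedComponentIn_subset _ _ <|
    isPreconnected_connectedComponentIn.Icc_subset (mem_connectedComponentIn hx) hy
      ⟨hxz.le, hz.le.trans (min_le_right _ _)⟩
  exact disjoint_left.1 hS hzS ⟨hxz, hz.trans_le (min_le_left _ _)⟩

end RealComponents

section Gaps

variable {C U : Set ℝ} {a b c x : ℝ}

lemma subset_cHull (hC : IsCompact C) : C ⊆ cHull C :=
  fun _ hx => ⟨csInf_le hC.bddBelow hx, le_csSup hC.bddAbove hx⟩

lemma connectedComponentIn_cHull_diff_eq_Ioo (hC : IsCompact C) (hne : C.Nonempty)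
    (hx : x ∈ cHull C \ C) :
    ∃ a b, a ∈ C ∧ b ∈ C ∧ x ∈ Ioo a b ∧ connectedComponentIn (cHull C \ C) x = Ioo a b := by
  have hleft : (C ∩ Iic x).Nonempty := ⟨sInf C, hC.sInf_mem hne, hx.1.1⟩
  have hright : (C ∩ Ici x).Nonempty := ⟨sSup C, hC.sSup_mem hne, hx.1.2⟩
  obtain ⟨ha, hax⟩ := (hC.inter_right isClosed_Iic).sSup_mem hleft
  obtain ⟨hb, hxb⟩ := (hC.inter_right isClosed_Ici).sInf_mem hright
  set a := sSup (C ∩ Iic x)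
  set b := sInf (C ∩ Ici x)
  have hxab : x ∈ Ioo a b :=
    ⟨hax.lt_of_ne (ne_of_mem_of_not_mem ha hx.2), hxb.lt_of_ne' (ne_of_mem_of_not_mem hb hx.2)⟩
  have hgap : Ioo a b ⊆ cHull C \ C := by
    refine fun y hy => ⟨⟨(csInf_le hC.bddBelow ha).trans hy.1.le,
      hy.2.le.trans (le_csSup hC.bddAbove hb)⟩, fun hyC => ?_⟩
    rcases le_total y x with hyx | hxy
    · exact hy.1.not_ge (le_csSup (hC.bddAbove.mono inter_subset_left) ⟨hyC, hyx⟩)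
    · exact hy.2.not_ge (csInf_le (hC.bddBelow.mono inter_subset_left) ⟨hyC, hxy⟩)
  exact ⟨a, b, ha, hb, hxab,
    connectedComponentIn_eq_Ioo hxab hgap (fun h => h.2 ha) (fun h => h.2 hb)⟩

lemma disjoint_cHull_diff_iUnion_range (C : Set ℝ) (𝒰 : ℕ → Set ℝ) (n : ℕ) :
    Disjoint (cHull C \ ⋃ i ∈ Finset.range (n + 1), 𝒰 i) (𝒰 n) :=
  disjoint_sdiff_left.mono_right (subset_biUnion_of_mem (u := 𝒰) (by simp))

namespace IsGap

lemma subset_cHull_diff (hU : IsGap C U) : U ⊆ cHull C \ C := by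
  obtain ⟨x, -, rfl⟩ := hU
  exact connectedComponentIn_subset _ _

lemma exists_eq_Ioo (hC : IsCompact C) (hne : C.Nonempty) (hU : IsGap C U) :
    ∃ a b, a ∈ C ∧ b ∈ C ∧ a < b ∧ U = Ioo a b := by
  obtain ⟨x, hx, rfl⟩ := hU
  obtain ⟨a, b, ha, hb, hxab, hU⟩ := connectedComponentIn_cHull_diff_eq_Ioo hC hne hx
  exact ⟨a, b, ha, hb, hxab.1.trans hxab.2, hU⟩

lemma mem_of_eq_Ioo (hC : IsCompact C) (hne : C.Nonempty) (hU : IsGap C (Ioo a b))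
    (hab : a < b) : a ∈ C ∧ b ∈ C := by
  obtain ⟨a', b', ha', hb', hab', hU⟩ := hU.exists_eq_Ioo hC hne
  have ha : a = a' := by rw [← csInf_Ioo hab, hU, csInf_Ioo hab']
  have hb : b = b' := by rw [← csSup_Ioo hab, hU, csSup_Ioo hab']
  exact ⟨ha ▸ ha', hb ▸ hb'⟩

lemma le_left_of_lt_right (hU : IsGap C (Ioo a b)) (hc : c ∈ C) (hcb : c < b) : c ≤ a :=
  le_of_not_gt fun hac => (hU.subset_cHull_diff ⟨hac, hcb⟩).2 hc

lemma right_le_of_left_lt (hU : IsGap C (Ioo a b)) (hc : c ∈ C) (hac : a < c) : b ≤ c :=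
  le_of_not_gt fun hcb => (hU.subset_cHull_diff ⟨hac, hcb⟩).2 hc

lemma eq_or_disjoint {V : Set ℝ} (hU : IsGap C U) (hV : IsGap C V) : U = V ∨ Disjoint U V := by
  obtain ⟨x, -, rfl⟩ := hU
  obtain ⟨y, -, rfl⟩ := hV
  refine (disjoint_or_nonempty_inter _ _).symm.imp (fun ⟨z, hzx, hzy⟩ => ?_) id
  exact (connectedComponentIn_eq hzx).trans (connectedComponentIn_eq hzy).symm

end IsGap

end Gaps

namespace IsPresentation

variable {C : Set ℝ} {𝒰 : ℕ → Set ℝ} {n : ℕ} {u x : ℝ}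

lemma exists_mem_eq_Ioo (hC : IsCompact C) (hne : C.Nonempty) (h𝒰 : IsPresentation C 𝒰)
    (hx : x ∈ cHull C \ C) : ∃ n a b, 𝒰 n = Ioo a b ∧ x ∈ Ioo a b := by
  obtain ⟨n, hn⟩ := h𝒰.2.2 _ ⟨x, hx, rfl⟩
  obtain ⟨a, b, -, -, hxab, hU⟩ := connectedComponentIn_cHull_diff_eq_Ioo hC hne hx
  exact ⟨n, a, b, hn.trans hU, hxab⟩

lemma pairwise_disjoint (h𝒰 : IsPresentation C 𝒰) : Pairwise (Disjoint on 𝒰) :=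
  fun i j hij => ((h𝒰.1 i).eq_or_disjoint (h𝒰.1 j)).resolve_left (h𝒰.2.1.ne hij)

lemma finite_setOf_le_volume (hC : IsCompact C) (hne : C.Nonempty) (h𝒰 : IsPresentation C 𝒰)
    {ε : ℝ≥0∞} (hε : 0 < ε) : {n | ε ≤ volume (𝒰 n)}.Finite := by
  refine Measure.finite_const_le_meas_of_disjoint_iUnion volume hε (fun n => ?_)
    h𝒰.pairwise_disjoint ?_
  · obtain ⟨a, b, -, -, -, h⟩ := (h𝒰.1 n).exists_eq_Ioo hC hne
    exact h ▸ measurableSet_Ioo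
  · refine ne_top_of_le_ne_top (measure_Icc_lt_top (a := sInf C) (b := sSup C)).ne
      (measure_mono ?_)
    exact iUnion_subset fun n y hy => ((h𝒰.1 n).subset_cHull_diff hy).1

lemma mem_bridge_self (hC : IsCompact C) (h𝒰 : IsPresentation C 𝒰) (n : ℕ) (hu : u ∈ C) :
    u ∈ bridge C 𝒰 n u := by
  refine mem_connectedComponentIn ⟨subset_cHull hC hu, ?_⟩
  simp only [mem_iUnion, not_exists]
  exact fun i _ hi => ((h𝒰.1 i).subset_cHull_diff hi).2 hu

lemma exists_gt_of_mem_bridge (hC : IsCompact C) (hne : C.Nonempty) (h𝒰 : IsPresentation C 𝒰)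
    (hx : x ∈ bridge C 𝒰 n u) (hxC : x ∉ C) : ∃ p a b, n < p ∧ 𝒰 p = Ioo a b ∧ x ∈ Ioo a b := by
  have hxS := connectedComponentIn_subset _ _ hx
  obtain ⟨p, a, b, hp, hxab⟩ := h𝒰.exists_mem_eq_Ioo hC hne ⟨hxS.1, hxC⟩
  refine ⟨p, a, b, lt_of_not_ge fun hpn => hxS.2 ?_, hp, hxab⟩
  exact mem_biUnion (Finset.mem_range.2 (Nat.lt_succ_of_le hpn)) (hp ▸ hxab)

variable {u₁ u₂ v : ℝ}

lemma bridge_right_subset_Icc (hC : IsCompact C) (h𝒰 : IsPresentation C 𝒰)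
    (hU : 𝒰 n = Ioo u₁ u₂) (h12 : u₁ < u₂) (hu₂ : u₂ ∈ C) (hv : u₂ ≤ v)
    (hvB : v ∉ bridge C 𝒰 n u₂) : bridge C 𝒰 n u₂ ⊆ Icc u₂ v := by
  have hu₂B := h𝒰.mem_bridge_self hC n hu₂
  refine fun x hx => ⟨connectedComponentIn_subset_Ici h12
    (hU ▸ disjoint_cHull_diff_iUnion_range C 𝒰 n) (connectedComponentIn_subset _ _ hu₂B) hx,
    not_lt.1 fun hvx => hvB ?_⟩
  exact isPreconnected_connectedComponentIn.Icc_subset hu₂B hx ⟨hv, hvx.le⟩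

lemma bridge_left_subset_Icc (hC : IsCompact C) (h𝒰 : IsPresentation C 𝒰)
    (hU : 𝒰 n = Ioo u₁ u₂) (h12 : u₁ < u₂) (hu₁ : u₁ ∈ C) (hv : v ≤ u₁)
    (hvB : v ∉ bridge C 𝒰 n u₁) : bridge C 𝒰 n u₁ ⊆ Icc v u₁ := by
  have hu₁B := h𝒰.mem_bridge_self hC n hu₁
  refine fun x hx => ⟨not_lt.1 fun hxv => hvB ?_, connectedComponentIn_subset_Iic h12
    (hU ▸ disjoint_cHull_diff_iUnion_range C 𝒰 n) (connectedComponentIn_subset _ _ hu₁B) hx⟩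
  exact isPreconnected_connectedComponentIn.Icc_subset hx hu₁B ⟨hxv.le, hv⟩

end IsPresentation

noncomputable def presentationThickness (C : Set ℝ) (𝒰 : ℕ → Set ℝ) : ℝ≥0∞ :=
  ⨅ (n : ℕ) (u : ℝ) (_ : u ∈ frontier (𝒰 n) ∩ C), gapRatio C 𝒰 n u

lemma exists_presentations_of_one_lt_thickness_mul {C₁ C₂ : Set ℝ}
    (h : 1 < thickness C₁ * thickness C₂) : ∃ 𝒰 𝒱, IsPresentation C₁ 𝒰 ∧ IsPresentation C₂ 𝒱 ∧
      1 < presentationThickness C₁ 𝒰 * presentationThickness C₂ 𝒱 := by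
  simp_rw [thickness, ENNReal.iSup_mul, ENNReal.mul_iSup, lt_iSup_iff] at h
  obtain ⟨𝒰, h𝒰, 𝒱, h𝒱, h⟩ := h
  exact ⟨𝒰, 𝒱, h𝒰, h𝒱, h⟩

lemma presentationThickness_mul_le {C : Set ℝ} {𝒰 : ℕ → Set ℝ} {n : ℕ} {u u₁ u₂ s e : ℝ}
    (hU : 𝒰 n = Ioo u₁ u₂) (h12 : u₁ < u₂) (hu : u ∈ C) (hu_end : u = u₁ ∨ u = u₂)
    (hB : bridge C 𝒰 n u ⊆ Icc s e) (hse : s ≤ e) :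
    presentationThickness C 𝒰 * ENNReal.ofReal (u₂ - u₁) ≤ ENNReal.ofReal (e - s) := by
  have ht : presentationThickness C 𝒰 ≤ gapRatio C 𝒰 n u :=
    iInf₂_le_of_le n u (iInf_le _ ⟨by rw [hU, frontier_Ioo h12]; exact hu_end, hu⟩)
  rw [gapRatio, hU, Real.diam_Ioo h12.le, ENNReal.le_div_iff_mul_le
    (Or.inl (ENNReal.ofReal_pos.2 (sub_pos.2 h12)).ne') (Or.inl ofReal_ne_top)] at ht
  exact ht.trans (ofReal_le_ofReal
    ((Metric.diam_mono hB (Metric.isBounded_Icc s e)).trans (Real.diam_Icc hse).le))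

lemma ENNReal.mul_le_one_of_mul_le_of_mul_le {s t a b : ℝ≥0∞} (ha : a ≠ 0) (ha' : a ≠ ∞)
    (hb : b ≠ 0) (hb' : b ≠ ∞) (hsa : s * a ≤ b) (htb : t * b ≤ a) : s * t ≤ 1 := by
  rw [← ENNReal.mul_le_mul_iff_left (mul_ne_zero ha hb) (mul_ne_top ha' hb'), one_mul]
  calc s * t * (a * b) = s * a * (t * b) := by ring
    _ ≤ b * a := mul_le_mul' hsa htb
    _ = a * b := mul_comm b a

def Interlaced (U V : Set ℝ) : Prop :=
  ∃ u₁ u₂ v₁ v₂, U = Ioo u₁ u₂ ∧ V = Ioo v₁ v₂ ∧ u₁ < v₁ ∧ v₁ < u₂ ∧ u₂ < v₂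

def linkedPairs (𝒰 𝒱 : ℕ → Set ℝ) : Set (ℕ × ℕ) :=
  {p | Interlaced (𝒰 p.1) (𝒱 p.2) ∨ Interlaced (𝒱 p.2) (𝒰 p.1)}

section Linked

variable {K L : Set ℝ} {𝒰 𝒱 : ℕ → Set ℝ}

lemma Interlaced.le_volume {U V : Set ℝ} (hK : IsCompact K) (hKne : K.Nonempty)
    (hL : IsCompact L) (hLne : L.Nonempty) (hU : IsGap K U) (hV : IsGap L V)
    (h : Interlaced U V) {r : ℝ≥0∞} (hr : ∀ x ∈ K, ∀ y ∈ L, r < edist x y) :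
    r ≤ volume U ∧ r ≤ volume V := by
  obtain ⟨u₁, u₂, v₁, v₂, rfl, rfl, h1, h2, h3⟩ := h
  obtain ⟨hu₁, hu₂⟩ := hU.mem_of_eq_Ioo hK hKne (h1.trans h2)
  obtain ⟨hv₁, hv₂⟩ := hV.mem_of_eq_Ioo hL hLne (h2.trans h3)
  have hdist {x y : ℝ} (hxy : x ≤ y) : edist x y = ENNReal.ofReal (y - x) := by
    rw [edist_dist, Real.dist_eq, abs_sub_comm, abs_of_nonneg (sub_nonneg.2 hxy)]
  rw [Real.volume_Ioo, Real.volume_Ioo]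
  constructor
  · calc r ≤ edist u₁ v₁ := (hr _ hu₁ _ hv₁).le
      _ = ENNReal.ofReal (v₁ - u₁) := hdist h1.le
      _ ≤ ENNReal.ofReal (u₂ - u₁) := ofReal_le_ofReal (by linarith)
  · calc r ≤ edist u₂ v₂ := (hr _ hu₂ _ hv₂).le
      _ = ENNReal.ofReal (v₂ - u₂) := hdist h3.le
      _ ≤ ENNReal.ofReal (v₂ - v₁) := ofReal_le_ofReal (by linarith)

lemma linkedPairs_finite (hK : IsCompact K) (hKne : K.Nonempty) (hL : IsCompact L)
    (hLne : L.Nonempty) (hKL : Disjoint K L) (h𝒰 : IsPresentation K 𝒰)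
    (h𝒱 : IsPresentation L 𝒱) : (linkedPairs 𝒰 𝒱).Finite := by
  obtain ⟨r, hr0, hr⟩ := Metric.exists_pos_forall_lt_edist hK hL.isClosed hKL
  have hr0' : (0 : ℝ≥0∞) < r := ENNReal.coe_pos.2 hr0
  refine ((h𝒰.finite_setOf_le_volume hK hKne hr0').prod
    (h𝒱.finite_setOf_le_volume hL hLne hr0')).subset ?_
  rintro ⟨n, m⟩ (h | h)
  · exact h.le_volume hK hKne hL hLne (h𝒰.1 n) (h𝒱.1 m) hr
  · exact (h.le_volume hL hLne hK hKne (h𝒱.1 m) (h𝒰.1 n)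
      fun y hy x hx => edist_comm x y ▸ hr x hx y hy).symm

lemma inter_cHull_nonempty (hK : IsCompact K) (hKne : K.Nonempty)
    (h : ¬∃ x ∈ Lᶜ, K ⊆ connectedComponentIn Lᶜ x) : (L ∩ cHull K).Nonempty := by
  by_contra! hLK
  have hsub : cHull K ⊆ Lᶜ := fun x hx hxL => hLK.subset ⟨hxL, hx⟩
  have hmem : sInf K ∈ cHull K := ⟨le_rfl, csInf_le_csSup hKne hK.bddBelow hK.bddAbove⟩
  exact h ⟨sInf K, hsub hmem,
    (subset_cHull hK).trans (isPreconnected_Icc.subset_connectedComponentIn hmem hsub)⟩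

lemma linkedPairs_nonempty (hK : IsCompact K) (hKne : K.Nonempty) (hL : IsCompact L)
    (hLne : L.Nonempty) (hKL : Disjoint K L) (h𝒰 : IsPresentation K 𝒰)
    (h𝒱 : IsPresentation L 𝒱) (hgK : ¬∃ x ∈ Lᶜ, K ⊆ connectedComponentIn Lᶜ x)
    (hgL : ¬∃ x ∈ Kᶜ, L ⊆ connectedComponentIn Kᶜ x) : (linkedPairs 𝒰 𝒱).Nonempty := by
  obtain ⟨l, hl, hlK⟩ := inter_cHull_nonempty hK hKne hgK
  obtain ⟨n, u₁, u₂, hU, hlU⟩ := h𝒰.exists_mem_eq_Ioo hK hKne ⟨hlK, disjoint_right.1 hKL hl⟩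
  have hgapU := hU ▸ h𝒰.1 n
  obtain ⟨hu₁, hu₂⟩ := hgapU.mem_of_eq_Ioo hK hKne (hlU.1.trans hlU.2)
  obtain ⟨l', hl', hl'U⟩ : ∃ l' ∈ L, l' ∉ Ioo u₁ u₂ := by
    by_contra! hLU
    refine hgL ⟨l, (hgapU.subset_cHull_diff hlU).2, Subset.trans hLU ?_⟩
    exact isPreconnected_Ioo.subset_connectedComponentIn hlU
      fun y hy => (hgapU.subset_cHull_diff hy).2
  rcases le_or_gt u₂ l' with hl'u | hl'u
  · obtain ⟨m, v₁, v₂, hV, hu₂V⟩ := h𝒱.exists_mem_eq_Ioo hL hLne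
      ⟨⟨(csInf_le hL.bddBelow hl).trans hlU.2.le, hl'u.trans (le_csSup hL.bddAbove hl')⟩,
        disjoint_left.1 hKL hu₂⟩
    have hlv₁ := (hV ▸ h𝒱.1 m).le_left_of_lt_right hl (hlU.2.trans hu₂V.2)
    exact ⟨(n, m), Or.inl ⟨u₁, u₂, v₁, v₂, hU, hV, hlU.1.trans_le hlv₁, hu₂V.1, hu₂V.2⟩⟩
  · have hl'u₁ : l' ≤ u₁ := not_lt.1 fun h => hl'U ⟨h, hl'u⟩
    obtain ⟨m, v₁, v₂, hV, hu₁V⟩ := h𝒱.exists_mem_eq_Ioo hL hLne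
      ⟨⟨(csInf_le hL.bddBelow hl').trans hl'u₁, hlU.1.le.trans (le_csSup hL.bddAbove hl)⟩,
        disjoint_left.1 hKL hu₁⟩
    have hv₂l := (hV ▸ h𝒱.1 m).right_le_of_left_lt hl (hu₁V.1.trans hlU.1)
    exact ⟨(n, m), Or.inr ⟨v₁, v₂, u₁, u₂, hV, hU, hu₁V.1, hu₁V.2, hv₂l.trans_lt hlU.2⟩⟩

lemma Interlaced.exists_swap_add_lt (hK : IsCompact K) (hKne : K.Nonempty)
    (hL : IsCompact L) (hLne : L.Nonempty) (hKL : Disjoint K L) (h𝒰 : IsPresentation K 𝒰)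
    (h𝒱 : IsPresentation L 𝒱)
    (hτ : 1 < presentationThickness K 𝒰 * presentationThickness L 𝒱) {n m : ℕ}
    (h : Interlaced (𝒰 n) (𝒱 m)) : ∃ p q, Interlaced (𝒱 q) (𝒰 p) ∧ n + m < p + q := by
  obtain ⟨u₁, u₂, v₁, v₂, hU, hV, h1, h2, h3⟩ := h
  obtain ⟨hu₁, hu₂⟩ := (hU ▸ h𝒰.1 n).mem_of_eq_Ioo hK hKne (h1.trans h2)
  obtain ⟨hv₁, hv₂⟩ := (hV ▸ h𝒱.1 m).mem_of_eq_Ioo hL hLne (h2.trans h3)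
  by_cases hKB : v₂ ∈ bridge K 𝒰 n u₂
  · obtain ⟨p, a₁, a₂, hnp, hP, hv₂P⟩ :=
      h𝒰.exists_gt_of_mem_bridge hK hKne hKB (disjoint_right.1 hKL hv₂)
    have hu₂a₁ := (hP ▸ h𝒰.1 p).le_left_of_lt_right hu₂ (h3.trans hv₂P.2)
    exact ⟨p, m, ⟨v₁, v₂, a₁, a₂, hV, hP, h2.trans_le hu₂a₁, hv₂P.1, hv₂P.2⟩, by omega⟩
  by_cases hLB : u₁ ∈ bridge L 𝒱 m v₁
  · obtain ⟨q, b₁, b₂, hmq, hQ, hu₁Q⟩ :=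
      h𝒱.exists_gt_of_mem_bridge hL hLne hLB (disjoint_left.1 hKL hu₁)
    have hb₂v₁ := (hQ ▸ h𝒱.1 q).right_le_of_left_lt hv₁ (hu₁Q.1.trans h1)
    exact ⟨n, q, ⟨b₁, b₂, u₁, u₂, hQ, hU, hu₁Q.1, hu₁Q.2, hb₂v₁.trans_lt h2⟩, by omega⟩
  have hKt := presentationThickness_mul_le hU (h1.trans h2) hu₂ (Or.inr rfl)
    (h𝒰.bridge_right_subset_Icc hK hU (h1.trans h2) hu₂ h3.le hKB) h3.le
  have hLt := presentationThickness_mul_le hV (h2.trans h3) hv₁ (Or.inl rfl)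
    (h𝒱.bridge_left_subset_Icc hL hV (h2.trans h3) hv₁ h1.le hLB) h1.le
  exfalso
  refine hτ.not_ge (ENNReal.mul_le_one_of_mul_le_of_mul_le ?_ ofReal_ne_top ?_ ofReal_ne_top
    (hKt.trans (ofReal_le_ofReal (by linarith))) (hLt.trans (ofReal_le_ofReal (by linarith))))
  · exact (ENNReal.ofReal_pos.2 (by linarith)).ne'
  · exact (ENNReal.ofReal_pos.2 (by linarith)).ne'

lemma exists_mem_linkedPairs_add_lt (hK : IsCompact K) (hKne : K.Nonempty) (hL : IsCompact L)
    (hLne : L.Nonempty) (hKL : Disjoint K L) (h𝒰 : IsPresentation K 𝒰)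
    (h𝒱 : IsPresentation L 𝒱)
    (hτ : 1 < presentationThickness K 𝒰 * presentationThickness L 𝒱) {n m : ℕ}
    (h : (n, m) ∈ linkedPairs 𝒰 𝒱) : ∃ p q, (p, q) ∈ linkedPairs 𝒰 𝒱 ∧ n + m < p + q := by
  rcases h with h | h
  · obtain ⟨p, q, hqp, hlt⟩ := h.exists_swap_add_lt hK hKne hL hLne hKL h𝒰 h𝒱 hτ
    exact ⟨p, q, Or.inr hqp, hlt⟩
  · obtain ⟨q, p, hpq, hlt⟩ :=
      h.exists_swap_add_lt hL hLne hK hKne hKL.symm h𝒱 h𝒰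
        (mul_comm (presentationThickness K 𝒰) _ ▸ hτ)
    exact ⟨p, q, Or.inl hpq, by omega⟩

end Linked

/-- Newhouse's Gap Lemma: if τ(C₁)·τ(C₂) > 1 and neither Cantor set is contained in a
gap (a connected component of the complement, bounded or unbounded) of the other,
then they intersect. -/
theorem gap_lemma (C₁ C₂ : Set ℝ) (h₁ : IsCantorSet C₁) (h₂ : IsCantorSet C₂)
    (hτ : 1 < thickness C₁ * thickness C₂)
    (hg₁ : ¬ ∃ x ∈ C₂ᶜ, C₁ ⊆ connectedComponentIn C₂ᶜ x)
    (hg₂ : ¬ ∃ x ∈ C₁ᶜ, C₂ ⊆ connectedComponentIn C₁ᶜ x) :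
    (C₁ ∩ C₂).Nonempty := by
  obtain ⟨hne₁, hc₁, -, -⟩ := h₁
  obtain ⟨hne₂, hc₂, -, -⟩ := h₂
  rw [← not_disjoint_iff_nonempty_inter]
  intro hdisj
  obtain ⟨𝒰, 𝒱, h𝒰, h𝒱, hτ⟩ := exists_presentations_of_one_lt_thickness_mul hτ
  obtain ⟨⟨n, m⟩, hnm, hmax⟩ := Set.exists_max_image _ (fun p : ℕ × ℕ => p.1 + p.2)
    (linkedPairs_finite hc₁ hne₁ hc₂ hne₂ hdisj h𝒰 h𝒱)
    (linkedPairs_nonempty hc₁ hne₁ hc₂ hne₂ hdisj h𝒰 h𝒱 hg₁ hg₂)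
  obtain ⟨p, q, hpq, hlt⟩ :=
    exists_mem_linkedPairs_add_lt hc₁ hne₁ hc₂ hne₂ hdisj h𝒰 h𝒱 hτ hnm
  exact (hmax _ hpq).not_gt hlt
end

section
/- If C ⊂ ℝ is a Cantor set with thickness τ(C) ≥ 1, then the sum set C + C = {a + b : a, b ∈ C} contains an interval; in fact, if the convex hull of C is [a,b], then C + C = [2a, 2b]. -/
open Set ENNReal Pointwise

/-!
Thickness at least one says that no gap of `C` is longer than the bridges beside it. If some
`t ∈ [2a, 2b]` were not in `C + C`, then `C` and its mirror image `t - C` would be disjoint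
compact sets at some positive distance `δ`, with overlapping hulls, neither lying in a gap of
the other. Such sets have a pair of linked (interleaved) gaps. Newhouse's descent: an endpoint
of the shorter of two linked gaps lies in a gap of the other set, which is linked with it and,
by the thickness condition, shorter by more than `2δ`. Iterating contradicts the positivity of
gap lengths.
-/

theorem Set.OrdConnected.subset_Iic_of_disjoint_Ioo {α : Type*} [LinearOrder α]
    [DenselyOrdered α] {s : Set α} {a b x : α} (hs : s.OrdConnected) (hd : Disjoint s (Ioo a b))
    (hab : a < b) (hx : x ∈ s) (hxa : x ≤ a) : s ⊆ Iic a := by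
  intro z hz
  rw [mem_Iic]
  by_contra! haz
  obtain ⟨w, haw, hwb⟩ := exists_between hab
  have hmem : min z w ∈ s :=
    hs.out hx hz ⟨le_min (hxa.trans haz.le) (hxa.trans haw.le), min_le_left _ _⟩
  exact disjoint_left.1 hd hmem ⟨lt_min haz haw, (min_le_right _ _).trans_lt hwb⟩

theorem Set.OrdConnected.subset_Ici_of_disjoint_Ioo {α : Type*} [LinearOrder α]
    [DenselyOrdered α] {s : Set α} {a b x : α} (hs : s.OrdConnected) (hd : Disjoint s (Ioo a b))
    (hab : a < b) (hx : x ∈ s) (hbx : b ≤ x) : s ⊆ Ici b := by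
  intro z hz
  rw [mem_Ici]
  by_contra! hzb
  obtain ⟨w, haw, hwb⟩ := exists_between hab
  have hmem : max z w ∈ s :=
    hs.out hz hx ⟨le_max_left _ _, max_le (hzb.le.trans hbx) (hwb.le.trans hbx)⟩
  exact disjoint_left.1 hd hmem ⟨haw.trans_le (le_max_right _ _), max_lt hzb hwb⟩

theorem Set.OrdConnected.subset_Ioo_of_notMem {α : Type*} [LinearOrder α] {s : Set α}
    {a b x : α} (hs : s.OrdConnected) (hx : x ∈ s) (hxab : x ∈ Icc a b) (ha : a ∉ s)
    (hb : b ∉ s) : s ⊆ Ioo a b := fun _ hz =>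
  ⟨lt_of_not_ge fun hza => ha (hs.out hz hx ⟨hza, hxab.1⟩),
    lt_of_not_ge fun hbz => hb (hs.out hx hz ⟨hxab.2, hbz⟩)⟩

theorem add_lt_of_lt_dist {δ x y : ℝ} (h : δ < dist x y) (hxy : x ≤ y) : x + δ < y := by
  rw [Real.dist_eq, abs_sub_comm, abs_of_nonneg (sub_nonneg.2 hxy)] at h
  linarith

namespace CantorSumset

structure GapEnds (X : Set ℝ) (p q : ℝ) : Prop where
  left_mem : p ∈ X
  right_mem : q ∈ X
  lt : p < q
  disjoint : Disjoint (Ioo p q) X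

/-- What `1 ≤ thickness X` says about gaps: each one is at most as long as the distance from it
to either end of `X`, and the distance between two gaps is at least the shorter one's length. -/
structure IsThick (X : Set ℝ) : Prop where
  isCompact : IsCompact X
  nonempty : X.Nonempty
  gap_le_left : ∀ {p q : ℝ}, GapEnds X p q → q - p ≤ p - sInf X
  gap_le_right : ∀ {p q : ℝ}, GapEnds X p q → q - p ≤ sSup X - q
  min_gap_le : ∀ {p q p' q' : ℝ}, GapEnds X p q → GapEnds X p' q' → q ≤ p' →
    min (q - p) (q' - p') ≤ p' - q

def LinkedGaps (X Y : Set ℝ) (p₁ p₂ q₁ q₂ : ℝ) : Prop :=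
  GapEnds X p₁ p₂ ∧ GapEnds Y q₁ q₂ ∧ p₁ < q₁ ∧ q₁ < p₂ ∧ p₂ < q₂

def reflect (t : ℝ) (X : Set ℝ) : Set ℝ := (t - ·) '' X

variable {X Y : Set ℝ} {t p q δ p₁ p₂ q₁ q₂ : ℝ}

theorem GapEnds.le_left_of_mem {z : ℝ} (hg : GapEnds X p q) (hz : z ∈ X) (hzq : z < q) :
    z ≤ p :=
  le_of_not_gt fun hpz => disjoint_left.1 hg.disjoint ⟨hpz, hzq⟩ hz

theorem exists_gapEnds_of_notMem (hX : IsClosed X) {x a b : ℝ} (hx : x ∉ X) (ha : a ∈ X)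
    (hax : a ≤ x) (hb : b ∈ X) (hxb : x ≤ b) : ∃ p q, GapEnds X p q ∧ p < x ∧ x < q := by
  have hbddA : BddAbove (X ∩ Iic x) := bddAbove_Iic.mono inter_subset_right
  have hbddB : BddBelow (X ∩ Ici x) := bddBelow_Ici.mono inter_subset_right
  have hp := (hX.inter isClosed_Iic).csSup_mem ⟨a, ha, hax⟩ hbddA
  have hq := (hX.inter isClosed_Ici).csInf_mem ⟨b, hb, hxb⟩ hbddB
  have hpx : sSup (X ∩ Iic x) < x := hp.2.lt_of_ne fun h => hx (h ▸ hp.1)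
  have hxq : x < sInf (X ∩ Ici x) := lt_of_le_of_ne hq.2 fun h => hx (h ▸ hq.1)
  refine ⟨_, _, ⟨hp.1, hq.1, hpx.trans hxq, disjoint_left.2 fun z hz hzX => ?_⟩, hpx, hxq⟩
  rcases le_total z x with hzx | hxz
  · exact (le_csSup hbddA ⟨hzX, hzx⟩).not_gt hz.1
  · exact (csInf_le hbddB ⟨hzX, hxz⟩).not_gt hz.2

@[simp]
theorem mem_reflect {y : ℝ} : y ∈ reflect t X ↔ t - y ∈ X :=
  ⟨by rintro ⟨x, hx, rfl⟩; simpa using hx, fun h => ⟨t - y, h, sub_sub_cancel t y⟩⟩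

@[simp]
theorem reflect_reflect : reflect t (reflect t X) = X := by
  ext; simp

theorem sSup_reflect (hne : X.Nonempty) (hX : BddBelow X) : sSup (reflect t X) = t - sInf X :=
  (Antitone.map_csInf_of_continuousAt (continuous_sub_left t).continuousAt
    (fun _ _ h => sub_le_sub_left h t) hne hX).symm

theorem sInf_reflect (hne : X.Nonempty) (hX : BddAbove X) : sInf (reflect t X) = t - sSup X :=
  (Antitone.map_csSup_of_continuousAt (continuous_sub_left t).continuousAt
    (fun _ _ h => sub_le_sub_left h t) hne hX).symm

theorem not_subset_Ioo_of_mem_reflect {v₁ v₂ : ℝ} (h₁ : v₁ ∈ reflect t X)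
    (h₂ : v₂ ∈ reflect t X) : ¬ X ⊆ Ioo v₁ v₂ := fun hsub => by
  have h₁' := hsub (mem_reflect.1 h₁)
  have h₂' := hsub (mem_reflect.1 h₂)
  linarith [h₁'.2, h₂'.1]

theorem GapEnds.reflect (hg : GapEnds X p q) (t : ℝ) :
    GapEnds (reflect t X) (t - q) (t - p) where
  left_mem := by simpa using hg.right_mem
  right_mem := by simpa using hg.left_mem
  lt := by linarith [hg.lt]
  disjoint := disjoint_left.2 fun z hz hzX =>
    disjoint_left.1 hg.disjoint ⟨by linarith [hz.2], by linarith [hz.1]⟩ (mem_reflect.1 hzX)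

theorem gapEnds_reflect_iff : GapEnds (reflect t X) p q ↔ GapEnds X (t - q) (t - p) :=
  ⟨fun h => by simpa using h.reflect t, fun h => by simpa using h.reflect t⟩

theorem IsThick.reflect (hX : IsThick X) (t : ℝ) : IsThick (reflect t X) where
  isCompact := hX.isCompact.image (continuous_sub_left t)
  nonempty := hX.nonempty.image _
  gap_le_left hg := by
    have := hX.gap_le_right (gapEnds_reflect_iff.1 hg)
    rw [sInf_reflect hX.nonempty hX.isCompact.bddAbove]
    linarith
  gap_le_right hg := by
    have := hX.gap_le_left (gapEnds_reflect_iff.1 hg)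
    rw [sSup_reflect hX.nonempty hX.isCompact.bddBelow]
    linarith
  min_gap_le hg hg' hle := by
    have := hX.min_gap_le (gapEnds_reflect_iff.1 hg') (gapEnds_reflect_iff.1 hg) (by linarith)
    simp only [_root_.sub_sub_sub_cancel_left] at this
    rwa [min_comm]

theorem LinkedGaps.reflect (h : LinkedGaps X Y p₁ p₂ q₁ q₂) (t : ℝ) :
    LinkedGaps (reflect t Y) (reflect t X) (t - q₂) (t - q₁) (t - p₂) (t - p₁) := by
  obtain ⟨hU, hV, h₁, h₂, h₃⟩ := h
  exact ⟨hV.reflect t, hU.reflect t, by linarith, by linarith, by linarith⟩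

theorem LinkedGaps.exists_of_le (hX : IsThick X) (hδ : 0 ≤ δ)
    (hsep : ∀ x ∈ X, ∀ y ∈ Y, δ < dist x y) (h : LinkedGaps X Y p₁ p₂ q₁ q₂)
    (hle : q₂ - q₁ ≤ p₂ - p₁) :
    ∃ p' q', LinkedGaps Y X q₁ q₂ p' q' ∧ q' - p' < q₂ - q₁ - 2 * δ := by
  obtain ⟨hU, hV, h₁, h₂, h₃⟩ := h
  have hq₂ : q₂ ∉ X := fun hq₂ => by simpa [hδ.not_gt] using hsep q₂ hq₂ q₂ hV.right_mem
  obtain ⟨p', q', hU', hp', hq'⟩ := exists_gapEnds_of_notMem hX.isCompact.isClosed hq₂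
    hU.right_mem h₃.le (hX.isCompact.sSup_mem hX.nonempty) (by linarith [hX.gap_le_right hU])
  have hp₂p' : p₂ ≤ p' := hU'.le_left_of_mem hU.right_mem (by linarith)
  have hbridge := hX.min_gap_le hU hU' hp₂p'
  have hδ₁ := add_lt_of_lt_dist (dist_comm p₂ q₁ ▸ hsep p₂ hU.right_mem q₁ hV.left_mem) h₂.le
  have hδ₂ := add_lt_of_lt_dist (hsep p' hU'.left_mem q₂ hV.right_mem) hp'.le
  -- `(p₁, p₂)` cannot be the shorter gap: the bridge `[p₂, p']` is shorter than it
  have hshort : q' - p' ≤ p' - p₂ := by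
    rcases min_cases (p₂ - p₁) (q' - p') with h | h <;> linarith
  exact ⟨p', q', ⟨hV, hU', by linarith, hp', hq'⟩, by linarith⟩

theorem exists_linkedGaps_min_lt (hX : IsThick X) (hY : IsThick Y)
    (hδ : 0 ≤ δ) (hsep : ∀ x ∈ X, ∀ y ∈ Y, δ < dist x y) (h : LinkedGaps X Y p₁ p₂ q₁ q₂) :
    ∃ a b c d, LinkedGaps Y X a b c d ∧
      min (b - a) (d - c) < min (p₂ - p₁) (q₂ - q₁) - 2 * δ := by
  rcases le_total (q₂ - q₁) (p₂ - p₁) with hle | hle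
  · obtain ⟨p', q', hL, hlt⟩ := h.exists_of_le hX hδ hsep hle
    exact ⟨q₁, q₂, p', q', hL, by rw [min_eq_right hle]; exact (min_le_right _ _).trans_lt hlt⟩
  · have hsep' : ∀ x ∈ reflect 0 Y, ∀ y ∈ reflect 0 X, δ < dist x y := fun x hx y hy => by
      simpa [dist_comm x y] using hsep _ (mem_reflect.1 hy) _ (mem_reflect.1 hx)
    obtain ⟨p', q', hL, hlt⟩ := (h.reflect 0).exists_of_le (hY.reflect 0) hδ hsep' (by linarith)
    have hL' := hL.reflect 0
    rw [reflect_reflect, reflect_reflect, _root_.sub_sub_cancel, _root_.sub_sub_cancel] at hL'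
    exact ⟨_, _, _, _, hL', by rw [min_eq_left hle]; exact (min_le_left _ _).trans_lt (by linarith)⟩

theorem not_linkedGaps (hX : IsThick X) (hY : IsThick Y) (hδ : 0 < δ)
    (hsep : ∀ x ∈ X, ∀ y ∈ Y, δ < dist x y) : ¬ LinkedGaps X Y p₁ p₂ q₁ q₂ := by
  intro h
  obtain ⟨n, hn⟩ := exists_nat_ge (min (p₂ - p₁) (q₂ - q₁) / δ)
  rw [div_le_iff₀ hδ] at hn
  induction n generalizing X Y p₁ p₂ q₁ q₂ with
  | zero =>
    have := lt_min (sub_pos.2 h.1.lt) (sub_pos.2 h.2.1.lt)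
    simp only [CharP.cast_eq_zero, zero_mul] at hn
    linarith
  | succ n ih =>
    obtain ⟨a, b, c, d, h', hlt⟩ := exists_linkedGaps_min_lt hX hY hδ.le hsep h
    exact ih hY hX (fun y hy x hx => dist_comm x y ▸ hsep x hx y hy) h'
      (by push_cast at hn; linarith)

theorem exists_linkedGaps_or_subset_gap (hX : IsThick X) (hY : IsThick Y) (hXY : Disjoint X Y)
    (h₁ : sInf Y ≤ sInf X) (h₂ : sInf X ≤ sSup Y) :
    (∃ v₁ v₂, GapEnds Y v₁ v₂ ∧ X ⊆ Ioo v₁ v₂) ∨ ∃ v₁ v₂ u₁ u₂, LinkedGaps Y X v₁ v₂ u₁ u₂ := by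
  have ha : sInf X ∈ X := hX.isCompact.sInf_mem hX.nonempty
  obtain ⟨v₁, v₂, hV, hv₁, hv₂⟩ := exists_gapEnds_of_notMem hY.isCompact.isClosed
    (disjoint_left.1 hXY ha) (hY.isCompact.sInf_mem hY.nonempty) h₁
    (hY.isCompact.sSup_mem hY.nonempty) h₂
  rcases lt_or_ge (sSup X) v₂ with hlt | hle
  · exact Or.inl ⟨v₁, v₂, hV, fun x hx => ⟨hv₁.trans_le (csInf_le hX.isCompact.bddBelow hx),
      (le_csSup hX.isCompact.bddAbove hx).trans_lt hlt⟩⟩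
  · obtain ⟨u₁, u₂, hU, hu₁, hu₂⟩ := exists_gapEnds_of_notMem hX.isCompact.isClosed
      (disjoint_right.1 hXY hV.right_mem) ha hv₂.le (hX.isCompact.sSup_mem hX.nonempty) hle
    exact Or.inr ⟨v₁, v₂, u₁, u₂, hV, hU,
      hv₁.trans_le (csInf_le hX.isCompact.bddBelow hU.left_mem), hu₁, hu₂⟩

theorem inter_nonempty_of_isThick (hX : IsThick X) (hY : IsThick Y) (h₁ : sInf X ≤ sSup Y)
    (h₂ : sInf Y ≤ sSup X) (hXY : ¬ ∃ v₁ v₂, GapEnds Y v₁ v₂ ∧ X ⊆ Ioo v₁ v₂)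
    (hYX : ¬ ∃ u₁ u₂, GapEnds X u₁ u₂ ∧ Y ⊆ Ioo u₁ u₂) : (X ∩ Y).Nonempty := by
  by_contra hdisj
  rw [not_nonempty_iff_eq_empty, ← disjoint_iff_inter_eq_empty] at hdisj
  obtain ⟨δ, hδ, hsep⟩ :=
    Metric.exists_pos_forall_lt_edist hX.isCompact hY.isCompact.isClosed hdisj
  have hsep' : ∀ x ∈ X, ∀ y ∈ Y, (δ : ℝ) < dist x y := fun x hx y hy => by
    have h := hsep x hx y hy
    rwa [edist_nndist, ENNReal.coe_lt_coe, ← NNReal.coe_lt_coe, coe_nndist] at h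
  rcases le_total (sInf Y) (sInf X) with h | h
  · rcases exists_linkedGaps_or_subset_gap hX hY hdisj h h₁ with hsub | ⟨_, _, _, _, hL⟩
    exacts [hXY hsub, not_linkedGaps hY hX hδ (fun y hy x hx => dist_comm x y ▸ hsep' x hx y hy) hL]
  · rcases exists_linkedGaps_or_subset_gap hY hX hdisj.symm h h₂ with hsub | ⟨_, _, _, _, hL⟩
    exacts [hYX hsub, not_linkedGaps hX hY hδ hsep' hL]

section Presentation

variable {C : Set ℝ} {P : ℕ → Set ℝ} {n m : ℕ} {u : ℝ}

theorem IsGap.subset {U : Set ℝ} (hU : IsGap C U) : U ⊆ cHull C \ C := by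
  obtain ⟨x, -, rfl⟩ := hU
  exact connectedComponentIn_subset _ _

theorem isGap_Ioo (hC : Bornology.IsBounded C) (hg : GapEnds C p q) : IsGap C (Ioo p q) := by
  have hsub : Ioo p q ⊆ cHull C \ C := fun z hz =>
    ⟨⟨(csInf_le hC.bddBelow hg.left_mem).trans hz.1.le,
      hz.2.le.trans (le_csSup hC.bddAbove hg.right_mem)⟩, disjoint_left.1 hg.disjoint hz⟩
  obtain ⟨x, hx⟩ := nonempty_Ioo.2 hg.lt
  refine ⟨x, hsub hx, (isPreconnected_Ioo.subset_connectedComponentIn hx hsub).antisymm ?_⟩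
  exact isPreconnected_connectedComponentIn.ordConnected.subset_Ioo_of_notMem
    (mem_connectedComponentIn (hsub hx)) ⟨hx.1.le, hx.2.le⟩
    (fun h => (connectedComponentIn_subset _ _ h).2 hg.left_mem)
    (fun h => (connectedComponentIn_subset _ _ h).2 hg.right_mem)

theorem mem_bridge (hC : Bornology.IsBounded C) (hP : IsPresentation C P) (hu : u ∈ C) (n : ℕ) :
    u ∈ bridge C P n u := by
  refine mem_connectedComponentIn ⟨⟨csInf_le hC.bddBelow hu, le_csSup hC.bddAbove hu⟩, ?_⟩
  intro h
  obtain ⟨i, -, hi⟩ := mem_iUnion₂.1 h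
  exact (IsGap.subset (hP.1 i) hi).2 hu

theorem bridge_subset_cHull : bridge C P n u ⊆ cHull C :=
  fun _ hz => (connectedComponentIn_subset _ _ hz).1

theorem disjoint_bridge (hmn : m ≤ n) : Disjoint (bridge C P n u) (P m) :=
  disjoint_left.2 fun _ hz hzm => (connectedComponentIn_subset _ _ hz).2
    (mem_iUnion₂.2 ⟨m, Finset.mem_range.2 (Nat.lt_succ_of_le hmn), hzm⟩)

theorem bridge_subset_Iic (hC : Bornology.IsBounded C) (hP : IsPresentation C P) (hu : u ∈ C)
    (hmn : m ≤ n) (hPm : P m = Ioo p q) (hpq : p < q) (hup : u ≤ p) : bridge C P n u ⊆ Iic p :=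
  isPreconnected_connectedComponentIn.ordConnected.subset_Iic_of_disjoint_Ioo
    (hPm ▸ disjoint_bridge hmn) hpq (mem_bridge hC hP hu n) hup

theorem bridge_subset_Ici (hC : Bornology.IsBounded C) (hP : IsPresentation C P) (hu : u ∈ C)
    (hmn : m ≤ n) (hPm : P m = Ioo p q) (hpq : p < q) (hqu : q ≤ u) : bridge C P n u ⊆ Ici q :=
  isPreconnected_connectedComponentIn.ordConnected.subset_Ici_of_disjoint_Ioo
    (hPm ▸ disjoint_bridge hmn) hpq (mem_bridge hC hP hu n) hqu

theorem mul_ofReal_le_of_bridge_subset {a : ℝ≥0∞} {l r : ℝ}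
    (hratio : ∀ n u, u ∈ frontier (P n) ∩ C → a < gapRatio C P n u) (hPn : P n = Ioo p q)
    (hg : GapEnds C p q) (hu : u = p ∨ u = q) (hsub : bridge C P n u ⊆ Icc l r) (hlr : l ≤ r) :
    a * ENNReal.ofReal (q - p) ≤ ENNReal.ofReal (r - l) := by
  have hfront : u ∈ frontier (P n) ∩ C := by
    rw [hPn, frontier_Ioo hg.lt]
    rcases hu with rfl | rfl
    exacts [⟨Or.inl rfl, hg.left_mem⟩, ⟨Or.inr rfl, hg.right_mem⟩]
  have h := hratio n u hfront
  rw [gapRatio, hPn, Real.diam_Ioo hg.lt.le] at h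
  calc a * ENNReal.ofReal (q - p) ≤ ENNReal.ofReal (Metric.diam (bridge C P n u)) :=
        (ENNReal.le_div_iff_mul_le (Or.inl (ENNReal.ofReal_pos.2 (sub_pos.2 hg.lt)).ne')
          (Or.inl ofReal_ne_top)).1 h.le
    _ ≤ ENNReal.ofReal (r - l) := ENNReal.ofReal_le_ofReal <|
        (Metric.diam_mono hsub (Metric.isBounded_Icc l r)).trans (Real.diam_Icc hlr).le

theorem le_of_one_le_thickness (hτ : 1 ≤ thickness C) {x y : ℝ} (hy : 0 ≤ y)
    (h : ∀ a < 1, ∀ P, IsPresentation C P →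
      (∀ n u, u ∈ frontier (P n) ∩ C → a < gapRatio C P n u) →
        a * ENNReal.ofReal x ≤ ENNReal.ofReal y) : x ≤ y := by
  refine (ENNReal.ofReal_le_ofReal_iff hy).1 (ENNReal.le_of_forall_lt_one_mul_le fun a ha => ?_)
  obtain ⟨P, hP⟩ := lt_iSup_iff.1 (ha.trans_le hτ)
  obtain ⟨hPres, hlt⟩ := lt_iSup_iff.1 hP
  exact h a ha P hPres fun n u hu => hlt.trans_le (iInf_le_of_le n (iInf₂_le u hu))

theorem isThick_of_one_le_thickness (hC : IsCompact C) (hne : C.Nonempty)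
    (hτ : 1 ≤ thickness C) : IsThick C where
  isCompact := hC
  nonempty := hne
  gap_le_left {p q} hg := by
    have hle := csInf_le hC.bddBelow hg.left_mem
    refine le_of_one_le_thickness hτ (sub_nonneg.2 hle) fun a _ P hP hratio => ?_
    obtain ⟨n, hn⟩ := hP.2.2 _ (isGap_Ioo hC.isBounded hg)
    exact mul_ofReal_le_of_bridge_subset hratio hn hg (Or.inl rfl) (fun _ hz =>
      ⟨(bridge_subset_cHull hz).1,
        bridge_subset_Iic hC.isBounded hP hg.left_mem le_rfl hn hg.lt le_rfl hz⟩) hle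
  gap_le_right {p q} hg := by
    have hle := le_csSup hC.bddAbove hg.right_mem
    refine le_of_one_le_thickness hτ (sub_nonneg.2 hle) fun a _ P hP hratio => ?_
    obtain ⟨n, hn⟩ := hP.2.2 _ (isGap_Ioo hC.isBounded hg)
    exact mul_ofReal_le_of_bridge_subset hratio hn hg (Or.inr rfl) (fun _ hz =>
      ⟨bridge_subset_Ici hC.isBounded hP hg.right_mem le_rfl hn hg.lt le_rfl hz,
        (bridge_subset_cHull hz).2⟩) hle
  min_gap_le {p q p' q'} hg hg' hle := by
    refine le_of_one_le_thickness hτ (sub_nonneg.2 hle) fun a _ P hP hratio => ?_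
    obtain ⟨n, hn⟩ := hP.2.2 _ (isGap_Ioo hC.isBounded hg)
    obtain ⟨m, hm⟩ := hP.2.2 _ (isGap_Ioo hC.isBounded hg')
    -- the bridge of whichever gap comes later in `P`, taken on the side facing the other gap,
    -- lies in `[q, p']`
    rcases le_total m n with hmn | hnm
    · calc a * ENNReal.ofReal (min (q - p) (q' - p')) ≤ a * ENNReal.ofReal (q - p) := by
            gcongr; exact min_le_left _ _
        _ ≤ _ := mul_ofReal_le_of_bridge_subset hratio hn hg (Or.inr rfl) (fun _ hz =>
            ⟨bridge_subset_Ici hC.isBounded hP hg.right_mem le_rfl hn hg.lt le_rfl hz,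
              bridge_subset_Iic hC.isBounded hP hg.right_mem hmn hm hg'.lt hle hz⟩) hle
    · calc a * ENNReal.ofReal (min (q - p) (q' - p')) ≤ a * ENNReal.ofReal (q' - p') := by
            gcongr; exact min_le_right _ _
        _ ≤ _ := mul_ofReal_le_of_bridge_subset hratio hm hg' (Or.inl rfl) (fun _ hz =>
            ⟨bridge_subset_Ici hC.isBounded hP hg'.left_mem hnm hn hg.lt hle hz,
              bridge_subset_Iic hC.isBounded hP hg'.left_mem le_rfl hm hg'.lt le_rfl hz⟩) hle

end Presentation

end CantorSumset

open CantorSumset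

/-- If a Cantor set has thickness at least 1, then its sum set with itself is the
interval `[2a, 2b]`, where `[a, b]` is its convex hull. -/
theorem sumset_eq_interval_of_thickness_ge_one (C : Set ℝ) (hC : IsCantorSet C)
    (hτ : 1 ≤ thickness C) :
    C + C = Set.Icc (2 * sInf C) (2 * sSup C) := by
  obtain ⟨hne, hcomp, -, -⟩ := hC
  have hthick := isThick_of_one_le_thickness hcomp hne hτ
  have hhull : C ⊆ Icc (sInf C) (sSup C) := fun x hx =>
    ⟨csInf_le hcomp.bddBelow hx, le_csSup hcomp.bddAbove hx⟩
  refine ((add_subset_add hhull hhull).trans ?_).antisymm fun t ht => ?_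
  · simpa only [two_mul] using Icc_add_Icc_subset _ _ _ _
  obtain ⟨z, hz, hzt⟩ := inter_nonempty_of_isThick hthick (hthick.reflect t)
    (by rw [sSup_reflect hne hcomp.bddBelow]; linarith [ht.1])
    (by rw [sInf_reflect hne hcomp.bddAbove]; linarith [ht.2])
    (fun ⟨_, _, hV, hsub⟩ => not_subset_Ioo_of_mem_reflect hV.left_mem hV.right_mem hsub)
    (fun ⟨_, _, hU, hsub⟩ => not_subset_Ioo_of_mem_reflect (t := t)
      (by simpa using hU.left_mem) (by simpa using hU.right_mem) hsub)
  exact ⟨z, hz, t - z, mem_reflect.1 hzt, add_sub_cancel z t⟩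
end
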